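/- Fix real q with 0 < q < 1 and set p = 1-q and Q = 1/q. For integers M and k with k ≥ M ≥ 1, the function g(w) = Σ_{h≥1} (w q^h)^M / ((1 - w q^{h-1})²(1 - w q^h)) is well-defined and analytic for real w with |w| < 1, and its k-th Taylor coefficient at 0 equals -q^{M+1}/((1-q)²·(1-q^k)) + q^M·(k+1-M)/((1-q)·(1-q^k)) + q²/((1-q)²·(Q^k - 1)). -/

import Mathlib

/-!
With `x = w q^h`, the `h`-th summand is `(x q)^M / ((1 - x)^2 (1 - x q)) = ∑ₙ aₙ xⁿ`, where
`aₙ = kernelCoeff q M n` is the `n`-th coefficient of the Cauchy product of `∑ (i + 1) xⁱ` and `∑_{j ≥ M} (x q)ʲ`.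
The double series `∑_h ∑_n aₙ q^{hn} wⁿ` converges absolutely (it is dominated by
`∑_h q^h ∑_n aₙ |w|ⁿ`, using `a₀ = 0`), so summing over `h` first exhibits `g` as the power
series `∑ₙ aₙ / (1 - qⁿ) wⁿ` on the unit disc. Finally, by induction on `n`,
`(1 - q)² aₙ = q^M ((n - M + 1)(1 - q) - q) + q^{n+2}`, which gives the stated closed form.
-/

open Finset
open scoped NNReal

def kernelCoeff {R : Type*} [CommRing R] (q : R) (M n : ℕ) : R :=
  ∑ j ∈ Ico M (n + 1), (((n - j : ℕ) : R) + 1) * q ^ j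

section Algebra

variable {R : Type*} [CommRing R] (q : R) {M : ℕ}

theorem kernelCoeff_zero (hM : 1 ≤ M) : kernelCoeff q M 0 = 0 := by
  simp [kernelCoeff, Ico_eq_empty_of_le hM]

theorem kernelCoeff_succ {n : ℕ} (hn : M ≤ n) :
    kernelCoeff q M (n + 1) = kernelCoeff q M n + ∑ j ∈ Ico M (n + 2), q ^ j := by
  have hn' : M ≤ n + 1 := hn.trans n.le_succ
  rw [kernelCoeff, kernelCoeff, sum_Ico_succ_top hn', sum_Ico_succ_top hn', Nat.sub_self,
    ← add_assoc, ← sum_add_distrib]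
  congr 1
  · refine sum_congr rfl fun j hj => ?_
    rw [Nat.sub_add_comm (Nat.lt_succ_iff.mp (mem_Ico.mp hj).2)]
    push_cast
    ring
  · simp

theorem one_sub_sq_mul_kernelCoeff {n : ℕ} (hn : M ≤ n) :
    (1 - q) ^ 2 * kernelCoeff q M n
      = q ^ M * (((n : R) - M + 1) * (1 - q) - q) + q ^ (n + 2) := by
  induction n, hn using Nat.le_induction with
  | base => simp [kernelCoeff]; ring
  | succ n hn ih =>
    have geom := geom_sum_Ico_mul q (by omega : M ≤ n + 2)
    rw [kernelCoeff_succ q hn]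
    push_cast
    linear_combination ih + (q - 1) * geom

end Algebra

theorem kernelCoeff_nonneg {q : ℝ} (hq : 0 ≤ q) (M n : ℕ) : 0 ≤ kernelCoeff q M n :=
  sum_nonneg fun _ _ => by positivity

theorem kernelCoeff_div_one_sub_pow {q : ℝ} (hq0 : 0 < q) (hq1 : q < 1) {M k : ℕ}
    (hM : 1 ≤ M) (hk : M ≤ k) :
    kernelCoeff q M k / (1 - q ^ k) =
      -q ^ (M + 1) / ((1 - q) ^ 2 * (1 - q ^ k))
        + q ^ M * ((k : ℝ) + 1 - M) / ((1 - q) * (1 - q ^ k))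
        + q ^ 2 / ((1 - q) ^ 2 * ((1 / q) ^ k - 1)) := by
  have hqk : q ^ k < 1 := pow_lt_one₀ hq0.le hq1 (by omega)
  have h1q : (1 - q) ^ 2 ≠ 0 := by positivity
  have hkernel : kernelCoeff q M k
      = (q ^ M * (((k : ℝ) - M + 1) * (1 - q) - q) + q ^ (k + 2)) / (1 - q) ^ 2 := by
    rw [eq_div_iff h1q, mul_comm, one_sub_sq_mul_kernelCoeff q hk]
  have hQk : (1 / q) ^ k - 1 = (1 - q ^ k) / q ^ k := by
    rw [one_div_pow, div_sub_one (pow_pos hq0 k).ne', ← neg_sub, neg_div]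
  rw [hkernel, hQk]
  have : 1 - q ^ k ≠ 0 := by linarith
  field_simp
  ring

section PowerSeries

variable {𝕜 : Type*} [NormedField 𝕜]

theorem hasSum_kernelCoeff_mul_pow [CompleteSpace 𝕜] {q x : 𝕜} (M : ℕ) (hx : ‖x‖ < 1)
    (hxq : ‖x * q‖ < 1) :
    HasSum (fun n => kernelCoeff q M n * x ^ n) ((x * q) ^ M / ((1 - x) ^ 2 * (1 - x * q))) := by
  set u : ℕ → 𝕜 := fun i => ((i : 𝕜) + 1) * x ^ i
  set v : ℕ → 𝕜 := fun j => if M ≤ j then (x * q) ^ j else 0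
  have hu : HasSum u (1 / (1 - x) ^ 2) := by
    simpa [u] using hasSum_choose_mul_geometric_of_norm_lt_one 1 hx
  have hu_norm : Summable fun i => ‖u i‖ := by
    refine (summable_choose_mul_geometric_of_norm_lt_one 1 (norm_norm x ▸ hx)).of_nonneg_of_le
      (fun _ => norm_nonneg _) fun i => ?_
    simpa [u, norm_mul, norm_pow] using mul_le_mul_of_nonneg_right
      (by simpa using Nat.norm_cast_le (α := 𝕜) (i + 1)) (pow_nonneg (norm_nonneg x) i)
  have hv : HasSum v ((x * q) ^ M / (1 - x * q)) := by
    have htail : HasSum (fun j => v (j + M)) ((x * q) ^ M / (1 - x * q)) := by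
      simpa [v, pow_add, div_eq_mul_inv, mul_comm] using
        (hasSum_geometric_of_norm_lt_one hxq).mul_left ((x * q) ^ M)
    have hhead : ∑ j ∈ range M, v j = 0 :=
      sum_eq_zero fun j hj => if_neg (not_le.mpr (mem_range.mp hj))
    simpa [hhead] using (hasSum_nat_add_iff M).mp htail
  have hv_norm : Summable fun j => ‖v j‖ :=
    (summable_geometric_of_lt_one (norm_nonneg _) hxq).of_nonneg_of_le (fun _ => norm_nonneg _)
      fun j => by by_cases hj : M ≤ j <;> simp [v, hj]; positivity
  have hcauchy := hasSum_sum_range_mul_of_summable_norm hv_norm hu_norm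
  rw [hv.tsum_eq, hu.tsum_eq, div_mul_div_comm, mul_one, mul_comm (1 - x * q)] at hcauchy
  convert hcauchy using 1
  ext n
  have hfilter : (range (n + 1)).filter (M ≤ ·) = Ico M (n + 1) := by ext; simp; omega
  simp only [v, ite_mul, zero_mul]
  rw [← sum_filter, hfilter, kernelCoeff, sum_mul]
  refine sum_congr rfl fun j hj => ?_
  obtain ⟨d, rfl⟩ := Nat.exists_eq_add_of_le (Nat.lt_succ_iff.mp (mem_Ico.mp hj).2)
  simp only [u, Nat.add_sub_cancel_left]
  ring

theorem hasSum_kernelCoeff_mul_geometric {q : 𝕜} (hq : ‖q‖ < 1) {M : ℕ} (hM : 1 ≤ M)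
    (w : 𝕜) (n : ℕ) :
    HasSum (fun h : ℕ => kernelCoeff q M n * (w * q ^ h) ^ n)
      (kernelCoeff q M n / (1 - q ^ n) * w ^ n) := by
  rcases n with _ | n
  · simp [kernelCoeff_zero q hM]
  · have hqn : ‖q ^ (n + 1)‖ < 1 := by
      rw [norm_pow]; exact pow_lt_one₀ (norm_nonneg q) hq n.succ_ne_zero
    have hterm : ∀ h : ℕ, kernelCoeff q M (n + 1) * (w * q ^ h) ^ (n + 1)
        = kernelCoeff q M (n + 1) * w ^ (n + 1) * (q ^ (n + 1)) ^ h := fun h => by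
      rw [mul_pow, ← pow_mul, ← pow_mul, mul_comm h, mul_assoc]
    simp only [hterm, div_eq_mul_inv, mul_right_comm _ (1 - q ^ (n + 1))⁻¹]
    exact (hasSum_geometric_of_norm_lt_one hqn).mul_left _

end PowerSeries

section Real

variable {q : ℝ} (hq0 : 0 ≤ q) (hq1 : q < 1) {M : ℕ} (hM : 1 ≤ M) {w : ℝ} (hw : |w| < 1)
include hq0 hq1 hM hw

theorem summable_kernelCoeff_mul_geometric_pow :
    Summable fun p : ℕ × ℕ => kernelCoeff q M p.1 * (w * q ^ p.2) ^ p.1 := by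
  have hcoeff : Summable fun n => kernelCoeff q M n * |w| ^ n :=
    (hasSum_kernelCoeff_mul_pow M (by simpa using hw)
      (by rw [Real.norm_eq_abs, abs_mul, abs_abs, abs_of_nonneg hq0]
          exact mul_lt_one_of_nonneg_of_lt_one_left (abs_nonneg w) hw hq1.le)).summable
  refine (hcoeff.mul_of_nonneg (summable_geometric_of_lt_one hq0 hq1)
    (fun n => by positivity [kernelCoeff_nonneg hq0 M n]) fun h => by positivity).of_norm_bounded ?_
  rintro ⟨_ | n, h⟩
  · simp [kernelCoeff_zero q hM]
  · rw [Real.norm_eq_abs, abs_mul, abs_of_nonneg (kernelCoeff_nonneg hq0 M _), abs_pow, abs_mul,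
      abs_of_nonneg (pow_nonneg hq0 h), mul_pow, ← mul_assoc]
    exact mul_le_mul_of_nonneg_left (pow_le_of_le_one (pow_nonneg hq0 h)
      (pow_le_one₀ hq0 hq1.le) n.succ_ne_zero) (by positivity [kernelCoeff_nonneg hq0 M (n + 1)])

theorem summable_and_hasSum_kernelCoeff_div :
    Summable (fun h : ℕ =>
      (w * q ^ (h + 1)) ^ M / ((1 - w * q ^ h) ^ 2 * (1 - w * q ^ (h + 1)))) ∧
    HasSum (fun n => kernelCoeff q M n / (1 - q ^ n) * w ^ n)
      (∑' h : ℕ, (w * q ^ (h + 1)) ^ M / ((1 - w * q ^ h) ^ 2 * (1 - w * q ^ (h + 1)))) := by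
  have hsum := (summable_kernelCoeff_mul_geometric_pow hq0 hq1 hM hw).hasSum
  have hq : ‖q‖ < 1 := by rwa [Real.norm_eq_abs, abs_of_nonneg hq0]
  have hrows : HasSum (fun h : ℕ =>
      (w * q ^ (h + 1)) ^ M / ((1 - w * q ^ h) ^ 2 * (1 - w * q ^ (h + 1)))) _ :=
    ((Equiv.prodComm ℕ ℕ).hasSum_iff.mpr hsum).prod_fiberwise fun h => by
      have hwq : ∀ j, ‖w * q ^ j‖ < 1 := fun j => by
        rw [norm_mul, norm_pow, Real.norm_eq_abs]
        exact mul_lt_one_of_nonneg_of_lt_one_left (abs_nonneg w) hw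
          (pow_le_one₀ (norm_nonneg q) hq.le)
      have := hasSum_kernelCoeff_mul_pow M (hwq h) (by rw [mul_assoc, ← pow_succ]; exact hwq (h + 1))
      rw [mul_assoc, ← pow_succ] at this
      exact this
  have hcols := hsum.prod_fiberwise fun n => hasSum_kernelCoeff_mul_geometric hq hM w n
  exact ⟨hrows.summable, hrows.tsum_eq ▸ hcols⟩

end Real

theorem hasFPowerSeriesOnBall_ofScalars_of_hasSum {c : ℕ → ℝ} {f : ℝ → ℝ} {r : ℝ≥0} (hr : 0 < r)
    (hf : ∀ w : ℝ, |w| < r → HasSum (fun n => c n * w ^ n) (f w)) :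
    HasFPowerSeriesOnBall f (FormalMultilinearSeries.ofScalars ℝ c) 0 r where
  r_le := by
    refine ENNReal.le_of_forall_nnreal_lt fun t ht => ?_
    apply FormalMultilinearSeries.le_radius_of_summable
    have ht' : |(t : ℝ)| < r := by rw [NNReal.abs_eq]; exact_mod_cast ht
    simpa [FormalMultilinearSeries.ofScalars_norm] using (hf t ht').summable.norm
  r_pos := by exact_mod_cast hr
  hasSum := fun {y} hy => by
    rw [Metric.eball_coe, mem_ball_zero_iff, Real.norm_eq_abs] at hy
    simpa [FormalMultilinearSeries.ofScalars_apply_eq, mul_comm] using hf y hy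

theorem HasFPowerSeriesAt.iteratedDeriv_div_factorial {𝕜 : Type*} [NontriviallyNormedField 𝕜]
    [CompleteSpace 𝕜] [CharZero 𝕜] {f : 𝕜 → 𝕜} {c : ℕ → 𝕜} {x : 𝕜}
    (hf : HasFPowerSeriesAt f (FormalMultilinearSeries.ofScalars 𝕜 c) x) (n : ℕ) :
    iteratedDeriv n f x / n.factorial = c n :=
  congrFun (FormalMultilinearSeries.ofScalars_series_injective 𝕜 𝕜
    (hf.analyticAt.hasFPowerSeriesAt.eq_formalMultilinearSeries hf)) n

theorem taylor_coeff_position_kernel_general (q : ℝ) (hq0 : 0 < q) (hq1 : q < 1)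
    (Q : ℝ) (hQ : Q = 1 / q)
    (M k : ℕ) (hM : 1 ≤ M) (hk : M ≤ k)
    (g : ℝ → ℝ)
    (hg : g = fun w : ℝ => ∑' h : ℕ,
      (w * q ^ (h + 1)) ^ M / ((1 - w * q ^ h) ^ 2 * (1 - w * q ^ (h + 1)))) :
    (∀ w : ℝ, |w| < 1 → Summable (fun h : ℕ =>
      (w * q ^ (h + 1)) ^ M / ((1 - w * q ^ h) ^ 2 * (1 - w * q ^ (h + 1))))) ∧
    AnalyticOnNhd ℝ g {w : ℝ | |w| < 1} ∧
    iteratedDeriv k g 0 / k.factorial =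
      -q ^ (M + 1) / ((1 - q) ^ 2 * (1 - q ^ k))
        + q ^ M * ((k : ℝ) + 1 - M) / ((1 - q) * (1 - q ^ k))
        + q ^ 2 / ((1 - q) ^ 2 * (Q ^ k - 1)) := by
  subst hg hQ
  have hseries := fun w (hw : |w| < 1) => summable_and_hasSum_kernelCoeff_div hq0.le hq1 hM hw
  have hball := hasFPowerSeriesOnBall_ofScalars_of_hasSum one_pos fun w hw =>
    (hseries w (by exact_mod_cast hw)).2
  have hdisk : {w : ℝ | |w| < 1} = Metric.eball 0 (1 : ℝ≥0) := by
    ext w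
    rw [Metric.eball_coe, NNReal.coe_one, mem_ball_zero_iff, Real.norm_eq_abs, Set.mem_ofPred_eq]
  refine ⟨fun w hw => (hseries w hw).1, hdisk ▸ hball.analyticOnNhd, ?_⟩
  rw [hball.hasFPowerSeriesAt.iteratedDeriv_div_factorial]
  exact kernelCoeff_div_one_sub_pow hq0 hq1 hM hk

/-- For `0 < q < 1`, `p = 1-q`, `Q = 1/q`, `k ≥ M ≥ 1`, the function
`g(w) = Σ_{h≥1} (w q^h)^M / ((1-w q^{h-1})²(1-w q^h))` is well defined and
analytic for `|w| < 1`, and its `k`-th Taylor coefficient at `0` equals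
`-q^{M+1}/((1-q)²(1-q^k)) + q^M (k+1-M)/((1-q)(1-q^k)) + q²/((1-q)²(Q^k-1))`. -/
theorem taylor_coeff_position_kernel (q : ℝ) (hq0 : 0 < q) (hq1 : q < 1)
    (p Q : ℝ) (hp : p = 1 - q) (hQ : Q = 1 / q)
    (M k : ℕ) (hM : 1 ≤ M) (hk : M ≤ k)
    (g : ℝ → ℝ)
    (hg : g = fun w : ℝ => ∑' h : ℕ,
      (w * q ^ (h + 1)) ^ M / ((1 - w * q ^ h) ^ 2 * (1 - w * q ^ (h + 1)))) :
    (∀ w : ℝ, |w| < 1 → Summable (fun h : ℕ =>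
      (w * q ^ (h + 1)) ^ M / ((1 - w * q ^ h) ^ 2 * (1 - w * q ^ (h + 1))))) ∧
    AnalyticOnNhd ℝ g {w : ℝ | |w| < 1} ∧
    iteratedDeriv k g 0 / k.factorial =
      -q ^ (M + 1) / ((1 - q) ^ 2 * (1 - q ^ k))
        + q ^ M * ((k : ℝ) + 1 - M) / ((1 - q) * (1 - q ^ k))
        + q ^ 2 / ((1 - q) ^ 2 * (Q ^ k - 1)) :=
  taylor_coeff_position_kernel_general q hq0 hq1 Q hQ M k hM hk g hg
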